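/- arXiv:math/0208137 — 5 statements merged into one kernel-verified Lean document; each statement's English description precedes it below -/
import Mathlib

section
/- Let a, a_1, ..., a_n, α, β be letters in the alphabet A_k with a_i ≠ a for 1 ≤ i ≤ n and α ≠ β. Then the word τ_a ∘ τ_{a_1} ∘ ⋯ ∘ τ_{a_n}(a) is a prefix of τ_a ∘ τ_{a_1} ∘ ⋯ ∘ τ_{a_n}(αβ). -/
/-!
Write `σ = τ_{a₁} ∘ ⋯ ∘ τ_{aₙ}`. Since no `aᵢ` equals `a`, each `τ_{aᵢ}` sends `a` to `aᵢ a`, so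
`σ(a) = p a` where `p` is also a prefix of `σ(αβ) = p r`. The remainder `r` always ends in two
distinct letters: this holds for `r = αβ`, and `τ_b` maps a word ending in distinct letters `xy`
to `b r'` with `r'` again ending in distinct letters (`xb` if `y = b`, `by` otherwise). Applying
`τ_a` then gives `τ_a(σ(a)) = τ_a(p) a`, a prefix of `τ_a(σ(αβ)) = τ_a(p) a r'`.
-/

/-- The Arnoux-Rauzy morphism τ_a on letters: τ_a(a) = a, τ_a(b) = ab for b ≠ a. -/
def tau {A : Type*} [DecidableEq A] (a b : A) : List A :=
  if b = a then [a] else [a, b]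

/-- The composition τ_{a₁} ∘ τ_{a₂} ∘ ⋯ ∘ τ_{aₙ} (for the list [a₁,...,aₙ]),
applied to a letter. -/
def tauComp {A : Type*} [DecidableEq A] : List A → A → List A
  | [], c => [c]
  | b :: l, c => (tauComp l c).flatMap (tau b)

section

variable {A : Type*} [DecidableEq A]

theorem tau_self (b : A) : tau b b = [b] := by
  simp [tau]

theorem tau_of_ne {b c : A} (h : c ≠ b) : tau b c = [b, c] := by
  simp [tau, h]

theorem exists_tau_eq_cons (b c : A) : ∃ t, tau b c = b :: t := by
  unfold tau
  split <;> exact ⟨_, rfl⟩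

theorem exists_flatMap_tau_append_singleton (b : A) (w : List A) :
    ∃ t, w.flatMap (tau b) ++ [b] = b :: t := by
  cases w with
  | nil => exact ⟨[], rfl⟩
  | cons c w =>
    obtain ⟨t, ht⟩ := exists_tau_eq_cons b c
    exact ⟨t ++ w.flatMap (tau b) ++ [b], by simp [ht]⟩

theorem tauComp_cons_append (b : A) (l : List A) (α β : A) :
    tauComp (b :: l) α ++ tauComp (b :: l) β = (tauComp l α ++ tauComp l β).flatMap (tau b) :=
  (List.flatMap_append ..).symm

def EndsWithDistinctPair (r : List A) : Prop :=
  ∃ x y, x ≠ y ∧ [x, y] <:+ r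

theorem EndsWithDistinctPair.exists_flatMap_tau_eq_cons {r : List A}
    (hr : EndsWithDistinctPair r) (b : A) :
    ∃ r', r.flatMap (tau b) = b :: r' ∧ EndsWithDistinctPair r' := by
  obtain ⟨x, y, hxy, s, rfl⟩ := hr
  obtain ⟨t, ht⟩ := exists_flatMap_tau_append_singleton b s
  by_cases hy : y = b
  · subst hy
    refine ⟨t ++ [x, y], ?_, x, y, hxy, List.suffix_append _ _⟩
    calc (s ++ [x, y]).flatMap (tau y) = (s.flatMap (tau y) ++ [y]) ++ [x, y] := by
          simp [tau_of_ne hxy, tau_self]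
      _ = y :: (t ++ [x, y]) := by rw [ht]; rfl
  · obtain ⟨w, hw⟩ := exists_tau_eq_cons b x
    refine ⟨t ++ w ++ [b, y], ?_, b, y, Ne.symm hy, List.suffix_append _ _⟩
    calc (s ++ [x, y]).flatMap (tau b) = (s.flatMap (tau b) ++ [b]) ++ w ++ [b, y] := by
          simp [hw, tau_of_ne hy]
      _ = b :: (t ++ w ++ [b, y]) := by rw [ht]; rfl

theorem exists_tauComp_eq_append_of_forall_ne {a : A} {l : List A} (hl : ∀ b ∈ l, b ≠ a)
    {α β : A} (hαβ : α ≠ β) :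
    ∃ p r, tauComp l a = p ++ [a] ∧ tauComp l α ++ tauComp l β = p ++ r ∧
      EndsWithDistinctPair r := by
  induction l with
  | nil => exact ⟨[], [α, β], rfl, rfl, α, β, hαβ, List.suffix_refl _⟩
  | cons b l ih =>
    obtain ⟨p, r, hpa, hpr, hr⟩ := ih fun c hc => hl c (List.mem_cons_of_mem b hc)
    obtain ⟨r', hr', hr'_ends⟩ := hr.exists_flatMap_tau_eq_cons b
    have hab : a ≠ b := (hl b List.mem_cons_self).symm
    refine ⟨p.flatMap (tau b) ++ [b], r', ?_, ?_, hr'_ends⟩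
    · simp [tauComp, hpa, tau_of_ne hab]
    · rw [tauComp_cons_append, hpr, List.flatMap_append, hr']
      simp

end

theorem tauComp_prefix_general {k : ℕ} (a α β : Fin k) (l : List (Fin k))
    (hl : ∀ b ∈ l, b ≠ a) (hαβ : α ≠ β) :
    tauComp (a :: l) a <+: (tauComp (a :: l) α ++ tauComp (a :: l) β) := by
  obtain ⟨p, r, hpa, hpr, hr⟩ := exists_tauComp_eq_append_of_forall_ne hl hαβ
  obtain ⟨r', hr', -⟩ := hr.exists_flatMap_tau_eq_cons a
  have h_self : tauComp (a :: l) a = p.flatMap (tau a) ++ [a] := by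
    simp [tauComp, hpa, tau_self]
  have h_pair : tauComp (a :: l) α ++ tauComp (a :: l) β = p.flatMap (tau a) ++ a :: r' := by
    rw [tauComp_cons_append, hpr, List.flatMap_append, hr']
  rw [h_self, h_pair]
  simp

/-- If a_i ≠ a for all i and α ≠ β, then τ_a ∘ τ_{a₁} ∘ ⋯ ∘ τ_{aₙ}(a) is a prefix of
τ_a ∘ τ_{a₁} ∘ ⋯ ∘ τ_{aₙ}(αβ). -/
theorem tauComp_prefix {k : ℕ} (hk : 2 ≤ k) (a α β : Fin k) (l : List (Fin k))
    (hl : ∀ b ∈ l, b ≠ a) (hαβ : α ≠ β) :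
    tauComp (a :: l) a <+: (tauComp (a :: l) α ++ tauComp (a :: l) β) :=
  tauComp_prefix_general a α β l hl hαβ
end

section
/- If x is an infinite word over the alphabet {a, b} (a ≠ b) containing the factor b a b, then for every positive integer r, the infinite word τ_a^r(x) contains the factor a^r b a^{r+1} b a. -/
/-- `u` is a factor of the infinite word `x`. -/
def InfFactor {A : Type*} (x : ℕ → A) (u : List A) : Prop :=
  ∃ m, u = (List.range u.length).map fun i => x (m + i)

/-- `u` is a factor of the image of the infinite word `x` under the morphism `f`. -/
def FactorOfImage {A : Type*} (f : A → List A) (x : ℕ → A) (u : List A) : Prop :=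
  ∃ m, u <:+: ((List.range m).map x).flatMap f

lemma tc_a {A : Type*} [DecidableEq A] (a : A) (r : ℕ) :
    tauComp (List.replicate r a) a = [a] := by
  induction r with
  | zero => rfl
  | succ k ih => simp [List.replicate_succ, tauComp, ih, tau]

lemma rep_cons {A : Type*} (a : A) (k : ℕ) (l : List A) :
    List.replicate k a ++ a :: l = a :: (List.replicate k a ++ l) := by
  rw [← List.singleton_append, ← List.append_assoc, ← List.replicate_succ',
    List.replicate_succ, List.cons_append]

lemma tc_b {A : Type*} [DecidableEq A] (a b : A) (h : b ≠ a) (r : ℕ) :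
    tauComp (List.replicate r a) b = List.replicate r a ++ [b] := by
  induction r with
  | zero => rfl
  | succ k ih =>
    rw [List.replicate_succ]
    show (tauComp (List.replicate k a) b).flatMap (tau a) = _
    rw [ih, List.flatMap_append]
    have hrep : ∀ k : ℕ, (List.replicate k a).flatMap (tau a) = List.replicate k a := by
      intro k
      induction k with
      | zero => rfl
      | succ j ihj => simp [List.replicate_succ, tau, ihj]
    simp only [List.flatMap_cons, List.flatMap_nil, List.append_nil, hrep, tau,
      if_neg h, List.replicate_succ, List.cons_append]
    exact rep_cons a k [b]

/-- If x is an infinite word over {a, b} (a ≠ b) containing the factor b a b, then for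
every r ≥ 1, τ_a^r(x) contains the factor a^r b a^{r+1} b a. -/
theorem run_factor {A : Type*} [DecidableEq A] (a b : A) (hab : a ≠ b)
    (x : ℕ → A) (hx : ∀ n, x n = a ∨ x n = b) (hbab : InfFactor x [b, a, b])
    (r : ℕ) (hr : 1 ≤ r) :
    FactorOfImage (tauComp (List.replicate r a)) x
      (List.replicate r a ++ [b] ++ List.replicate (r + 1) a ++ [b, a]) := by
  obtain ⟨m, hm⟩ := hbab
  have h3 : List.range 3 = [0, 1, 2] := by decide
  rw [show ([b,a,b] : List A).length = 3 from rfl, h3] at hm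
  simp only [List.map_cons, List.map_nil, List.cons.injEq, and_true] at hm
  obtain ⟨h0, h1, h2⟩ := hm
  have e0 : x m = b := by simpa using h0.symm
  have e1 : x (m+1) = a := h1.symm
  have e2 : x (m+2) = b := h2.symm
  refine ⟨m + 4, ?_⟩
  have hrange : List.range (m + 4) = List.range m ++ [m, m+1, m+2, m+3] := by
    simp [show m+4 = m+3+1 by ring, show m+3 = m+2+1 by ring,
      show m+2 = m+1+1 by ring, List.range_succ]
  rw [hrange, List.map_append, List.flatMap_append]
  have hfb : tauComp (List.replicate r a) b = List.replicate r a ++ [b] :=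
    tc_b a b (Ne.symm hab) r
  have hfa := tc_a a r
  have hnext : ∃ t : List A, tauComp (List.replicate r a) (x (m+3)) = a :: t := by
    obtain ⟨k, rfl⟩ : ∃ k, r = k + 1 := ⟨r - 1, by omega⟩
    rcases hx (m+3) with h | h <;> rw [h]
    · exact ⟨[], hfa⟩
    · exact ⟨List.replicate k a ++ [b], by rw [hfb]; simp [List.replicate_succ]⟩
  obtain ⟨t, ht⟩ := hnext
  refine ⟨((List.range m).map x).flatMap (tauComp (List.replicate r a)), t, ?_⟩
  simp only [List.map_cons, List.map_nil, List.flatMap_cons, List.flatMap_nil,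
    e0, e1, e2, hfb, hfa, ht, List.append_nil]
  simp [List.replicate_succ, List.append_assoc]
end

section
/- Let w be the fixed point of the 'infinite substitution' i ↦ i(i+1) over the positive integers (so w = 1 2 1 3 1 2 1 4 ...), i.e., w is the binary-carry/ruler-type sequence, and let w' be the image of w under the morphism Θ(i) = 1^i 2 1^i 3 1^i. Then the words 22, 33, 2 1^n 2, 3 1^n 3, 3 1^n 2 1^n 3, and 2 1^n 3 1^n 2 (for all n ≥ 0) are not factors of w'. -/
/-- The ruler sequence w = 1,2,1,3,1,2,1,4,…, the fixed point of the substitution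
i ↦ i (i+1) starting from 1: w_m = ν₂(m+1) + 1 (0-indexed). -/
def ruler (m : ℕ) : ℕ := padicValNat 2 (m + 1) + 1

/-- The morphism Θ(i) = 1^i 2 1^i 3 1^i. -/
def theta (i : ℕ) : List ℕ :=
  List.replicate i 1 ++ [2] ++ List.replicate i 1 ++ [3] ++ List.replicate i 1

/-- `u` is a factor of w' = Θ(w), the Cassaigne example. -/
def FactorW' (u : List ℕ) : Prop :=
  ∃ m, u <:+: ((List.range m).map ruler).flatMap theta

/-- Grammar of tails of w' after a `3` (with a pending run parameter `a`). -/
inductive Ttail : ℕ → List ℕ → Prop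
  | base (a : ℕ) : Ttail a (List.replicate a 1)
  | step (a c : ℕ) (hc : 1 ≤ c) (v : List ℕ) (hv : Ttail c v) :
      Ttail a (List.replicate (a + c) 1 ++ 2 :: (List.replicate c 1 ++ 3 :: v))

lemma Ttail_cases {c : ℕ} {X : List ℕ} (h : Ttail c X) :
    X = List.replicate c 1 ∨
    ∃ c', 1 ≤ c' ∧ ∃ v', Ttail c' v' ∧
      X = List.replicate (c + c') 1 ++ 2 :: (List.replicate c' 1 ++ 3 :: v') := by
  cases h with
  | base a => exact Or.inl rfl
  | step a c' hc' v' hv' => exact Or.inr ⟨c', hc', v', hv', rfl⟩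

lemma Tbuild : ∀ (l : List ℕ), (∀ x ∈ l, 1 ≤ x) → ∀ a,
    Ttail a (List.replicate a 1 ++ l.flatMap theta) := by
  intro l
  induction l with
  | nil => intro _ a; simpa using Ttail.base a
  | cons c l ih =>
      intro h a
      have hc : 1 ≤ c := h c (by simp)
      have hrest := ih (fun x hx => h x (by simp [hx])) c
      have heq : List.replicate a 1 ++ (c :: l).flatMap theta =
          List.replicate (a + c) 1 ++ 2 ::
            (List.replicate c 1 ++ 3 :: (List.replicate c 1 ++ l.flatMap theta)) := by
        simp only [List.flatMap_cons, theta, List.replicate_add, List.append_assoc,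
          List.cons_append, List.singleton_append, List.nil_append]
      rw [heq]
      exact Ttail.step a c hc _ hrest

/-- Occurrence decomposition: an occurrence of a letter in `p ++ q` is in `p` or in `q`. -/
lemma mid {p q s t : List ℕ} {x : ℕ} (h : p ++ q = s ++ x :: t) :
    (∃ t₀, p = s ++ x :: t₀ ∧ t = t₀ ++ q) ∨ (∃ s₀, s = p ++ s₀ ∧ q = s₀ ++ x :: t) := by
  rcases List.append_eq_append_iff.mp h with ⟨a', h1, h2⟩ | ⟨c', h1, h2⟩
  · exact Or.inr ⟨a', h1, h2⟩
  · cases c' with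
    | nil =>
        refine Or.inr ⟨[], by simp [h1], ?_⟩
        simpa using h2.symm
    | cons h0 c'' =>
        simp only [List.cons_append] at h2
        injection h2 with hx ht
        exact Or.inl ⟨c'', by rw [h1, ← hx], ht⟩

lemma no_in_replicate {x : ℕ} (hx : x ≠ 1) {m : ℕ} {s t : List ℕ}
    (h : List.replicate m (1:ℕ) = s ++ x :: t) : False := by
  have : x ∈ List.replicate m (1:ℕ) := h ▸ (by simp)
  exact hx (List.eq_of_mem_replicate this)

/-- First non-1 letter of a word of the form 1^n x … is determined. -/
lemma P : ∀ (n m : ℕ) {x y : ℕ} {r w : List ℕ}, x ≠ 1 → y ≠ 1 →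
    (List.replicate n 1 ++ x :: r) <+: (List.replicate m 1 ++ y :: w) →
    n = m ∧ x = y ∧ r <+: w := by
  intro n
  induction n with
  | zero =>
      intro m x y r w hx hy h
      cases m with
      | zero =>
          simp only [List.replicate, List.nil_append] at h
          rcases List.cons_prefix_cons.mp h with ⟨h1, h2⟩
          exact ⟨rfl, h1, h2⟩
      | succ k =>
          simp only [List.replicate_succ, List.nil_append, List.cons_append] at h
          rcases List.cons_prefix_cons.mp h with ⟨h1, _⟩
          exact absurd h1 hx
  | succ n ih =>
      intro m x y r w hx hy h
      cases m with
      | zero =>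
          simp only [List.replicate_succ, List.replicate, List.cons_append,
            List.nil_append] at h
          rcases List.cons_prefix_cons.mp h with ⟨h1, _⟩
          exact absurd h1.symm hy
      | succ k =>
          simp only [List.replicate_succ, List.cons_append] at h
          rcases List.cons_prefix_cons.mp h with ⟨_, h2⟩
          obtain ⟨h1, h3, h4⟩ := ih k hx hy h2
          exact ⟨by omega, h3, h4⟩

lemma Peq {n m x y : ℕ} {r w : List ℕ} (hx : x ≠ 1) (hy : y ≠ 1)
    (h : List.replicate n 1 ++ x :: r = List.replicate m 1 ++ y :: w) :
    n = m ∧ x = y ∧ r <+: w :=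
  P n m hx hy (h ▸ List.prefix_refl _)

/-- After any `2` in a `Ttail` word comes `1^c 3 …` with a valid tail. -/
lemma O2 {a : ℕ} {v : List ℕ} (h : Ttail a v) : ∀ s t, v = s ++ 2 :: t →
    ∃ c, 1 ≤ c ∧ ∃ v', Ttail c v' ∧ t = List.replicate c 1 ++ 3 :: v' := by
  induction h with
  | base a =>
      intro s t h
      exact absurd h (fun h => (no_in_replicate (by norm_num) h))
  | step a c hc v hv ih =>
      intro s t h
      rcases mid h with ⟨t₀, h1, _⟩ | ⟨s₀, _, h2⟩
      · exact absurd h1 (fun h1 => (no_in_replicate (by norm_num) h1))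
      · cases s₀ with
        | nil =>
            simp only [List.nil_append] at h2
            injection h2 with _ h2'
            exact ⟨c, hc, v, hv, h2'.symm⟩
        | cons h0 s₁ =>
            simp only [List.cons_append] at h2
            injection h2 with _ h2'
            rcases mid h2' with ⟨t₀, h3, _⟩ | ⟨s₂, _, h4⟩
            · exact absurd h3 (fun h3 => (no_in_replicate (by norm_num) h3))
            · cases s₂ with
              | nil => simp at h4
              | cons h0' s₃ =>
                  simp only [List.cons_append] at h4
                  injection h4 with _ h4'
                  exact ih s₃ t h4'

/-- After any `3` in a `Ttail` word comes a valid tail with parameter ≥ 1. -/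
lemma O3 {a : ℕ} {v : List ℕ} (h : Ttail a v) : ∀ s t, v = s ++ 3 :: t →
    ∃ c, 1 ≤ c ∧ Ttail c t := by
  induction h with
  | base a =>
      intro s t h
      exact absurd h (fun h => (no_in_replicate (by norm_num) h))
  | step a c hc v hv ih =>
      intro s t h
      rcases mid h with ⟨t₀, h1, _⟩ | ⟨s₀, _, h2⟩
      · exact absurd h1 (fun h1 => (no_in_replicate (by norm_num) h1))
      · cases s₀ with
        | nil => simp at h2
        | cons h0 s₁ =>
            simp only [List.cons_append] at h2
            injection h2 with _ h2'
            rcases mid h2' with ⟨t₀, h3, _⟩ | ⟨s₂, _, h4⟩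
            · exact absurd h3 (fun h3 => (no_in_replicate (by norm_num) h3))
            · cases s₂ with
              | nil =>
                  simp only [List.nil_append] at h4
                  injection h4 with _ h4'
                  exact ⟨c, hc, h4' ▸ hv⟩
              | cons h0' s₃ =>
                  simp only [List.cons_append] at h4
                  injection h4 with _ h4'
                  exact ih s₃ t h4'

lemma R1 {a n : ℕ} {v s t : List ℕ} (h : Ttail a v)
    (he : v = s ++ (2 :: (List.replicate n 1 ++ [2])) ++ t) : False := by
  obtain ⟨c, hc, v', hv', ht⟩ := O2 h s ((List.replicate n 1 ++ [2]) ++ t) (by simpa using he)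
  have h1 : List.replicate n 1 ++ (2:ℕ) :: t = List.replicate c 1 ++ 3 :: v' := by
    simpa using ht
  obtain ⟨_, h23, _⟩ := Peq (by norm_num) (by norm_num) h1
  norm_num at h23

lemma R2 {a n : ℕ} {v s t : List ℕ} (h : Ttail a v)
    (he : v = s ++ (3 :: (List.replicate n 1 ++ [3])) ++ t) : False := by
  obtain ⟨c, hc, htt⟩ := O3 h s ((List.replicate n 1 ++ [3]) ++ t) (by simpa using he)
  rcases Ttail_cases htt with heq | ⟨c', hc', v', hv', heq⟩
  · exact no_in_replicate (x := 3) (by norm_num) (by simpa using heq.symm)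
  · have h1 : List.replicate n 1 ++ (3:ℕ) :: t =
        List.replicate (c + c') 1 ++ 2 :: (List.replicate c' 1 ++ 3 :: v') := by
      simpa using heq
    obtain ⟨_, h32, _⟩ := Peq (by norm_num) (by norm_num) h1
    norm_num at h32

lemma R3 {a n : ℕ} {v s t : List ℕ} (h : Ttail a v)
    (he : v = s ++ (3 :: (List.replicate n 1 ++ 2 :: (List.replicate n 1 ++ [3]))) ++ t) :
    False := by
  obtain ⟨c, hc, htt⟩ := O3 h s
    ((List.replicate n 1 ++ 2 :: (List.replicate n 1 ++ [3])) ++ t) (by simpa using he)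
  rcases Ttail_cases htt with heq | ⟨c', hc', v', hv', heq⟩
  · exact no_in_replicate (x := 2) (by norm_num) (by simpa using heq.symm)
  · have h1 : List.replicate n 1 ++ (2:ℕ) :: ((List.replicate n 1 ++ [3]) ++ t) =
        List.replicate (c + c') 1 ++ 2 :: (List.replicate c' 1 ++ 3 :: v') := by
      simpa using heq
    obtain ⟨hn1, _, hpre⟩ := Peq (by norm_num) (by norm_num) h1
    have h2 : (List.replicate n 1 ++ (3:ℕ) :: t) <+:
        (List.replicate c' 1 ++ 3 :: v') := by simpa using hpre
    obtain ⟨hn2, _, _⟩ := P n c' (by norm_num) (by norm_num) h2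
    omega

lemma R4 {a n : ℕ} {v s t : List ℕ} (h : Ttail a v)
    (he : v = s ++ (2 :: (List.replicate n 1 ++ 3 :: (List.replicate n 1 ++ [2]))) ++ t) :
    False := by
  obtain ⟨c, hc, v', hv', ht⟩ := O2 h s
    ((List.replicate n 1 ++ 3 :: (List.replicate n 1 ++ [2])) ++ t) (by simpa using he)
  have h1 : List.replicate n 1 ++ (3:ℕ) :: ((List.replicate n 1 ++ [2]) ++ t) =
      List.replicate c 1 ++ 3 :: v' := by simpa using ht
  obtain ⟨hn1, _, hpre⟩ := Peq (by norm_num) (by norm_num) h1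
  subst hn1
  have hpre' : (List.replicate n 1 ++ (2:ℕ) :: t) <+: v' := by simpa using hpre
  rcases Ttail_cases hv' with heq | ⟨c', hc', v'', hv'', heq⟩
  · rw [heq] at hpre'
    have : (2:ℕ) ∈ List.replicate n (1:ℕ) := hpre'.subset (by simp)
    have := List.eq_of_mem_replicate this
    norm_num at this
  · rw [heq] at hpre'
    obtain ⟨hn2, _, _⟩ := P n (n + c') (by norm_num) (by norm_num) hpre'
    omega

lemma Tw (m : ℕ) : Ttail 0 (((List.range m).map ruler).flatMap theta) := by
  have := Tbuild ((List.range m).map ruler) (by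
    intro x hx
    simp only [List.mem_map] at hx
    obtain ⟨k, _, hk⟩ := hx
    simp [← hk, ruler]) 0
  simpa using this

/-- The words 22, 33, 2 1ⁿ 2, 3 1ⁿ 3, 3 1ⁿ 2 1ⁿ 3 and 2 1ⁿ 3 1ⁿ 2 are not factors of w'. -/
theorem not_factors_of_w' (n : ℕ) :
    ¬ FactorW' [2, 2] ∧ ¬ FactorW' [3, 3] ∧
    ¬ FactorW' (2 :: (List.replicate n 1 ++ [2])) ∧
    ¬ FactorW' (3 :: (List.replicate n 1 ++ [3])) ∧
    ¬ FactorW' (3 :: (List.replicate n 1 ++ 2 :: (List.replicate n 1 ++ [3]))) ∧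
    ¬ FactorW' (2 :: (List.replicate n 1 ++ 3 :: (List.replicate n 1 ++ [2]))) := by
  refine ⟨?_, ?_, ?_, ?_, ?_, ?_⟩
  · rintro ⟨m, s, t, h⟩
    exact R1 (n := 0) (Tw m) (by simpa using h.symm)
  · rintro ⟨m, s, t, h⟩
    exact R2 (n := 0) (Tw m) (by simpa using h.symm)
  · rintro ⟨m, s, t, h⟩
    exact R1 (n := n) (Tw m) h.symm
  · rintro ⟨m, s, t, h⟩
    exact R2 (n := n) (Tw m) h.symm
  · rintro ⟨m, s, t, h⟩
    exact R3 (n := n) (Tw m) h.symm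
  · rintro ⟨m, s, t, h⟩
    exact R4 (n := n) (Tw m) h.symm
end

section
/- Let w' be the infinite word over {1,2,3} from the Cassaigne example (image under Θ(i) = 1^i 2 1^i 3 1^i of the ruler sequence). Then the palindromic factors of w' of even length are exactly the words 1^n (n even), and the palindromic factors of odd length n are exactly 1^n, 1^{(n−1)/2} 2 1^{(n−1)/2}, and 1^{(n−1)/2} 3 1^{(n−1)/2}. Hence the palindrome complexity of w' is p(n) = 1 for n even and p(n) = 3 for n odd. -/
/-!
Apart from a leading block `1^{r₀}`, the word `w' = Θ(r₀) Θ(r₁) ⋯` is a sequence of runs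
`x 1^g`: `(2, r_k)` followed by `(3, r_k + r_{k+1})`, for `k = 0, 1, …`. Since every `r_k`
is positive, consecutive runs differ both in their letter and in their length. Hence `w'` has
no factor `y 1^c y` (two consecutive runs with the same letter) and no factor `y 1^c z 1^c y`
(two consecutive runs of the same length), for letters `y, z ≠ 1`. Peeling a palindrome from
the outside in, the only palindromes avoiding both patterns are `1^n` and `1^m y 1^m`, and all
of these with `y ∈ {2, 3}` occur in `Θ(i)` for large `i`. Counting them by length gives 1 or 3.
-/

open List

namespace Cassaigne

section Words

variable {α : Type*} {a x y z : α}

lemma _root_.List.Palindrome.eq_replicate_or_eq_replicate_append_cons {u : List α}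
    (hu : u.Palindrome)
    (hpair : ∀ y c, y ≠ a → ¬ y :: (replicate c a ++ [y]) <:+: u)
    (htriple : ∀ y z c, y ≠ a → z ≠ a →
      ¬ y :: (replicate c a ++ z :: (replicate c a ++ [y])) <:+: u) :
    (∃ n, u = replicate n a) ∨ ∃ m y, y ≠ a ∧ u = replicate m a ++ y :: replicate m a := by
  induction hu with
  | nil => exact Or.inl ⟨0, rfl⟩
  | singleton x =>
    by_cases hx : x = a
    · exact Or.inl ⟨1, by simp [hx]⟩
    · exact Or.inr ⟨0, x, hx, by simp⟩
  | @cons_concat x l hl ih =>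
    have hsub : l <:+: x :: (l ++ [x]) := ⟨[x], [x], rfl⟩
    rcases ih (fun y c hy h => hpair y c hy (h.trans hsub))
      (fun y z c hy hz h => htriple y z c hy hz (h.trans hsub)) with
      ⟨n, rfl⟩ | ⟨m, y, hy, rfl⟩
    · by_cases hx : x = a
      · exact Or.inl ⟨n + 2, by rw [hx, replicate_succ, replicate_succ']⟩
      · exact absurd (infix_refl _) (hpair x n hx)
    · by_cases hx : x = a
      · exact Or.inr ⟨m + 1, y, hy, by
          rw [hx]; nth_rw 2 [replicate_succ']; rw [replicate_succ]; simp⟩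
      · exact absurd (by simp) (htriple x y m hx hy)

lemma replicate_append_cons_infix (a x : α) {n k : ℕ} (h : n ≤ k) :
    replicate n a ++ x :: replicate n a <:+: replicate k a ++ x :: replicate k a := by
  obtain ⟨d, rfl⟩ := Nat.exists_eq_add_of_le' h
  refine ⟨replicate d a, replicate d a, ?_⟩
  nth_rw 2 [add_comm]
  simp [← replicate_append_replicate]

def runs (a : α) (l : List (α × ℕ)) : List α := l.flatMap fun p => p.1 :: replicate p.2 a

@[simp] lemma runs_nil (a : α) : runs a [] = [] := rfl

@[simp] lemma runs_cons (a : α) (p : α × ℕ) (l : List (α × ℕ)) :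
    runs a (p :: l) = p.1 :: (replicate p.2 a ++ runs a l) := by
  simp [runs]

lemma replicate_append_cons_inj {m n : ℕ} {u v : List α} (hx : x ≠ a) (hy : y ≠ a)
    (h : replicate m a ++ x :: u = replicate n a ++ y :: v) : m = n ∧ x = y ∧ u = v := by
  induction m generalizing n with
  | zero =>
    cases n with
    | zero => simpa using h
    | succ n => exact absurd (List.cons.inj h).1 (by simpa using hx)
  | succ m ih =>
    cases n with
    | zero => exact absurd (List.cons.inj h).1.symm (by simpa using hy)
    | succ n =>
      obtain ⟨hmn, hxy, huv⟩ := ih (List.cons.inj h).2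
      exact ⟨by rw [hmn], hxy, huv⟩

lemma infix_of_cons_infix_replicate_append {p : ℕ} {v w : List α} (hx : x ≠ a)
    (h : x :: v <:+: replicate p a ++ w) : x :: v <:+: w := by
  induction p with
  | zero => simpa using h
  | succ p ih =>
    rcases infix_cons_iff.1 h with hpre | hinf
    · exact absurd (cons_prefix_cons.1 hpre).1 hx
    · exact ih hinf

variable {l : List (α × ℕ)}

lemma eq_cons_of_prefix_runs {m g : ℕ} {v : List α} (hl : ∀ p ∈ l, p.1 ≠ a) (hx : x ≠ a)
    (h : replicate m a ++ x :: v <+: replicate g a ++ runs a l) :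
    m = g ∧ ∃ g' l', l = (x, g') :: l' ∧ v <+: replicate g' a ++ runs a l' := by
  obtain ⟨t, ht⟩ := h
  cases l with
  | nil =>
    have : x ∈ replicate g a := by simpa using congrArg (x ∈ ·) ht
    exact absurd (eq_of_mem_replicate this) hx
  | cons q l' =>
    simp only [runs_cons, append_assoc, cons_append] at ht
    obtain ⟨hmg, rfl, hv⟩ := replicate_append_cons_inj hx (hl q (by simp)) ht
    exact ⟨hmg, q.2, l', rfl, t, hv⟩

lemma exists_eq_append_of_infix_runs {p : ℕ} {v : List α} (hx : x ≠ a)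
    (h : x :: v <:+: replicate p a ++ runs a l) :
    ∃ l₁ g l₂, l = l₁ ++ (x, g) :: l₂ ∧ v <+: replicate g a ++ runs a l₂ := by
  induction l generalizing p with
  | nil =>
    have : x ∈ replicate p a := by simpa using h.subset mem_cons_self
    exact absurd (eq_of_mem_replicate this) hx
  | cons q l ih =>
    rcases infix_cons_iff.1 (infix_of_cons_infix_replicate_append hx (by simpa using h)) with hpre | hinf
    · obtain ⟨rfl, hv⟩ := cons_prefix_cons.1 hpre
      exact ⟨[], q.2, l, rfl, hv⟩
    · obtain ⟨l₁, g, l₂, rfl, hv⟩ := ih hinf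
      exact ⟨q :: l₁, g, l₂, rfl, hv⟩

lemma exists_append_prefix_of_prefix_runs {m : List (α × ℕ)} {k g : ℕ}
    (hl : ∀ p ∈ l, p.1 ≠ a) (hm : ∀ p ∈ m, p.1 ≠ a) (hy : y ≠ a)
    (h : replicate k a ++ runs a m ++ [y] <+: replicate g a ++ runs a l) :
    k = g ∧ ∃ g', m ++ [(y, g')] <+: l := by
  induction m generalizing k g l with
  | nil =>
    obtain ⟨hkg, g', l', rfl, -⟩ := eq_cons_of_prefix_runs hl hy (by simpa using h)
    exact ⟨hkg, g', by simp⟩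
  | cons q m ih =>
    obtain ⟨hkg, g', l', rfl, hl'⟩ :=
      eq_cons_of_prefix_runs hl (hm q (by simp)) (by simpa using h)
    obtain ⟨rfl, g'', hg''⟩ :=
      ih (forall_mem_cons.1 hl).2 (forall_mem_cons.1 hm).2 (by simpa using hl')
    exact ⟨hkg, g'', by simpa using hg''⟩

lemma exists_append_infix_of_infix_runs {m : List (α × ℕ)} {k : ℕ}
    (hl : ∀ p ∈ l, p.1 ≠ a) (hm : ∀ p ∈ m, p.1 ≠ a) (hy : y ≠ a)
    (h : runs a m ++ [y] <:+: replicate k a ++ runs a l) : ∃ g, m ++ [(y, g)] <:+: l := by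
  cases m with
  | nil =>
    obtain ⟨l₁, g, l₂, rfl, -⟩ := exists_eq_append_of_infix_runs hy (by simpa using h)
    exact ⟨g, by simpa using infix_append l₁ [(y, g)] l₂⟩
  | cons q m =>
    obtain ⟨l₁, g, l₂, rfl, hl₂⟩ :=
      exists_eq_append_of_infix_runs (hm q (by simp)) (by simpa using h)
    obtain ⟨rfl, g', hg'⟩ := exists_append_prefix_of_prefix_runs
      (forall_mem_cons.1 (forall_mem_append.1 hl).2).2 (forall_mem_cons.1 hm).2 hy
      (by simpa using hl₂)
    exact ⟨g', ((prefix_cons_inj q).2 hg').isInfix.trans (suffix_append l₁ _).isInfix⟩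

def RunsDiffer (p q : α × ℕ) : Prop := p.1 ≠ q.1 ∧ p.2 ≠ q.2

lemma not_infix_runs_pair (hchain : l.IsChain RunsDiffer) (hl : ∀ p ∈ l, p.1 ≠ a)
    (hy : y ≠ a) {c k : ℕ} : ¬ y :: (replicate c a ++ [y]) <:+: replicate k a ++ runs a l := by
  intro h
  obtain ⟨g, hg⟩ := exists_append_infix_of_infix_runs (m := [(y, c)]) hl (by simpa using hy) hy
    (by simpa using h)
  exact (isChain_pair.1 (hchain.infix hg)).1 rfl

lemma not_infix_runs_triple (hchain : l.IsChain RunsDiffer) (hl : ∀ p ∈ l, p.1 ≠ a)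
    (hy : y ≠ a) (hz : z ≠ a) {c k : ℕ} :
    ¬ y :: (replicate c a ++ z :: (replicate c a ++ [y])) <:+: replicate k a ++ runs a l := by
  intro h
  obtain ⟨g, hg⟩ := exists_append_infix_of_infix_runs (m := [(y, c), (z, c)]) hl
    (by simpa using ⟨hy, hz⟩) hy (by simpa using h)
  exact (isChain_cons_cons.1 (hchain.infix hg)).1.2 rfl

end Words

def thetaRuns (f : ℕ → ℕ) : ℕ → List (ℕ × ℕ)
  | 0 => []
  | m + 1 => (2, f 0) :: (3, f 0 + f 1) :: thetaRuns (f ∘ Nat.succ) m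

-- The padding `1^{f m}` completes the last run to `(3, f (m - 1) + f m)`, as in the infinite word.
lemma flatMap_theta_append_replicate (f : ℕ → ℕ) (m : ℕ) :
    ((range m).map f).flatMap theta ++ replicate (f m) 1 =
      replicate (f 0) 1 ++ runs 1 (thetaRuns f m) := by
  induction m generalizing f with
  | zero => simp [thetaRuns]
  | succ m ih =>
    rw [range_succ_eq_map, map_cons, flatMap_cons, map_map, append_assoc]
    have ih' := ih (f ∘ Nat.succ)
    rw [Function.comp_apply] at ih'
    rw [ih']
    simp [theta, thetaRuns, ← replicate_append_replicate]

lemma isChain_thetaRuns {f : ℕ → ℕ} (hf : ∀ k, 0 < f k) (m : ℕ) :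
    (thetaRuns f m).IsChain RunsDiffer := by
  induction m generalizing f with
  | zero => exact .nil
  | succ m ih =>
    have h0 := hf 0
    have h1 := hf 1
    refine isChain_cons_cons.2 ⟨⟨by simp, by simp; omega⟩,
      isChain_cons.2 ⟨?_, ih fun k => hf (k + 1)⟩⟩
    cases m with
    | zero => simp [thetaRuns]
    | succ m => simp [thetaRuns, RunsDiffer]; omega

lemma fst_ne_one_of_mem_thetaRuns {f : ℕ → ℕ} {m : ℕ} {p : ℕ × ℕ} (hp : p ∈ thetaRuns f m) :
    p.1 ≠ 1 := by
  induction m generalizing f with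
  | zero => simp [thetaRuns] at hp
  | succ m ih =>
    simp only [thetaRuns, mem_cons] at hp
    rcases hp with rfl | rfl | hp
    · simp
    · simp
    · exact ih hp

variable {f : ℕ → ℕ} {m : ℕ} {u : List ℕ}

lemma infix_runs_thetaRuns_of_infix (h : u <:+: ((range m).map f).flatMap theta) :
    u <:+: replicate (f 0) 1 ++ runs 1 (thetaRuns f m) :=
  flatMap_theta_append_replicate f m ▸ h.trans (prefix_append _ _).isInfix

lemma not_infix_flatMap_theta_pair (hf : ∀ k, 0 < f k) {y c : ℕ} (hy : y ≠ 1) :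
    ¬ y :: (replicate c 1 ++ [y]) <:+: ((range m).map f).flatMap theta := fun h =>
  not_infix_runs_pair (isChain_thetaRuns hf m) (fun _ => fst_ne_one_of_mem_thetaRuns) hy
    (infix_runs_thetaRuns_of_infix h)

lemma not_infix_flatMap_theta_triple (hf : ∀ k, 0 < f k) {y z c : ℕ} (hy : y ≠ 1)
    (hz : z ≠ 1) :
    ¬ y :: (replicate c 1 ++ z :: (replicate c 1 ++ [y])) <:+: ((range m).map f).flatMap theta :=
  fun h => not_infix_runs_triple (isChain_thetaRuns hf m) (fun _ => fst_ne_one_of_mem_thetaRuns)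
    hy hz (infix_runs_thetaRuns_of_infix h)

lemma eq_two_or_eq_three_of_mem_flatMap_theta {s : List ℕ} {y : ℕ} (hy : y ≠ 1)
    (h : y ∈ s.flatMap theta) : y = 2 ∨ y = 3 := by
  obtain ⟨i, -, hi⟩ := mem_flatMap.1 h
  simp only [theta, mem_append, mem_replicate, mem_singleton] at hi
  omega

lemma ruler_pos (k : ℕ) : 0 < ruler k := Nat.succ_pos _

lemma exists_le_ruler (n : ℕ) : ∃ m, n ≤ ruler m :=
  ⟨2 ^ n - 1, by simp [ruler, Nat.sub_add_cancel Nat.one_le_two_pow]⟩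

lemma factorW'_of_forall_infix_theta {N : ℕ} (h : ∀ k, N ≤ k → u <:+: theta k) :
    FactorW' u := by
  obtain ⟨m, hm⟩ := exists_le_ruler N
  refine ⟨m + 1, (h _ hm).trans ?_⟩
  simpa [range_succ] using (suffix_append _ _).isInfix

lemma factorW'_replicate_append_two (n : ℕ) :
    FactorW' (replicate n 1 ++ 2 :: replicate n 1) :=
  factorW'_of_forall_infix_theta (N := n) fun k hk =>
    (replicate_append_cons_infix 1 2 hk).trans ⟨[], [3] ++ replicate k 1, by simp [theta]⟩

lemma factorW'_replicate_append_three (n : ℕ) :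
    FactorW' (replicate n 1 ++ 3 :: replicate n 1) :=
  factorW'_of_forall_infix_theta (N := n) fun k hk =>
    (replicate_append_cons_infix 1 3 hk).trans ⟨replicate k 1 ++ [2], [], by simp [theta]⟩

lemma factorW'_of_infix {v : List ℕ} (hv : FactorW' v) (h : u <:+: v) : FactorW' u :=
  let ⟨m, hm⟩ := hv; ⟨m, h.trans hm⟩

lemma factorW'_replicate (n : ℕ) : FactorW' (replicate n 1) :=
  factorW'_of_infix (factorW'_replicate_append_two n) (prefix_append _ _).isInfix

lemma factorW'_palindrome_iff :
    (FactorW' u ∧ u.reverse = u) ↔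
      ((∃ n, u = replicate n 1) ∨
        (∃ m, u = replicate m 1 ++ 2 :: replicate m 1) ∨
        (∃ m, u = replicate m 1 ++ 3 :: replicate m 1)) := by
  constructor
  · rintro ⟨⟨m, hm⟩, hpal⟩
    rcases (Palindrome.of_reverse_eq hpal).eq_replicate_or_eq_replicate_append_cons
      (fun y c hy h => not_infix_flatMap_theta_pair ruler_pos hy (h.trans hm))
      (fun y z c hy hz h => not_infix_flatMap_theta_triple ruler_pos hy hz (h.trans hm)) with
      ⟨n, rfl⟩ | ⟨k, y, hy, rfl⟩
    · exact Or.inl ⟨n, rfl⟩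
    · rcases eq_two_or_eq_three_of_mem_flatMap_theta hy (hm.subset (by simp)) with rfl | rfl
      · exact Or.inr (Or.inl ⟨k, rfl⟩)
      · exact Or.inr (Or.inr ⟨k, rfl⟩)
  · rintro (⟨n, rfl⟩ | ⟨k, rfl⟩ | ⟨k, rfl⟩)
    · exact ⟨factorW'_replicate n, by simp⟩
    · exact ⟨factorW'_replicate_append_two k, by simp⟩
    · exact ⟨factorW'_replicate_append_three k, by simp⟩

lemma palindromicFactors_of_even {n : ℕ} (hn : Even n) :
    {u : List ℕ | u.length = n ∧ FactorW' u ∧ u.reverse = u} = {replicate n 1} := by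
  ext u
  simp only [Set.mem_ofPred_eq, Set.mem_singleton_iff, factorW'_palindrome_iff]
  constructor
  · rintro ⟨rfl, ⟨k, rfl⟩ | ⟨k, rfl⟩ | ⟨k, rfl⟩⟩
    · simp
    all_goals obtain ⟨r, hr⟩ := hn; simp at hr; omega
  · rintro rfl
    exact ⟨length_replicate .., Or.inl ⟨n, rfl⟩⟩

lemma palindromicFactors_of_odd {m : ℕ} :
    {u : List ℕ | u.length = 2 * m + 1 ∧ FactorW' u ∧ u.reverse = u} =
      {replicate (2 * m + 1) 1, replicate m 1 ++ 2 :: replicate m 1,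
        replicate m 1 ++ 3 :: replicate m 1} := by
  ext u
  simp only [Set.mem_ofPred_eq, Set.mem_insert_iff, Set.mem_singleton_iff,
    factorW'_palindrome_iff]
  constructor
  · rintro ⟨hlen, ⟨k, rfl⟩ | ⟨k, rfl⟩ | ⟨k, rfl⟩⟩ <;> simp at hlen
    · simp [hlen]
    all_goals obtain rfl : k = m := by omega
    all_goals simp
  · rintro (rfl | rfl | rfl)
    · exact ⟨length_replicate .., Or.inl ⟨_, rfl⟩⟩
    · exact ⟨by simp; omega, Or.inr (Or.inl ⟨m, rfl⟩)⟩
    · exact ⟨by simp; omega, Or.inr (Or.inr ⟨m, rfl⟩)⟩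

end Cassaigne

/-- The palindromic factors of w' are exactly the words 1ⁿ, 1^m 2 1^m and 1^m 3 1^m
(so the even-length ones are the 1ⁿ with n even, and the odd-length ones of length n are
1ⁿ, 1^((n−1)/2) 2 1^((n−1)/2) and 1^((n−1)/2) 3 1^((n−1)/2)); hence the palindrome
complexity of w' is 1 for even lengths and 3 for odd lengths. -/
theorem palindromes_of_w' :
    (∀ u : List ℕ, (FactorW' u ∧ u.reverse = u) ↔
      ((∃ n, u = List.replicate n 1) ∨
        (∃ m, u = List.replicate m 1 ++ 2 :: List.replicate m 1) ∨
        (∃ m, u = List.replicate m 1 ++ 3 :: List.replicate m 1))) ∧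
    ∀ n : ℕ, 1 ≤ n →
      {u : List ℕ | u.length = n ∧ FactorW' u ∧ u.reverse = u}.ncard =
        if Even n then 1 else 3 := by
  refine ⟨fun u => Cassaigne.factorW'_palindrome_iff, fun n _ => ?_⟩
  split_ifs with hn
  · rw [Cassaigne.palindromicFactors_of_even hn, Set.ncard_singleton]
  · obtain ⟨m, rfl⟩ := Nat.not_even_iff_odd.1 hn
    rw [Cassaigne.palindromicFactors_of_odd, Set.ncard_eq_three]
    refine ⟨_, _, _, fun h => ?_, fun h => ?_, fun h => ?_, rfl⟩
    · simpa using congrArg (2 ∈ ·) h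
    · simpa using congrArg (3 ∈ ·) h
    · simp at h
end

section
/- If X is a minimal aperiodic subshift over a finite alphabet that is K-linearly recurrent, then X contains no factor of the form u^N with u a nonempty word and N > K + 1. -/
section Helpers
variable {A : Type*}

private lemma per_mod {n : ℕ} {f : ℕ → A} (hn : 0 < n) (hper : ∀ i, f (i + n) = f i) :
    ∀ i, f i = f (i % n) := by
  intro i
  induction i using Nat.strong_induction_on with
  | _ i ih =>
    rcases lt_or_ge i n with h | h
    · rw [Nat.mod_eq_of_lt h]
    · have h1 : f i = f (i - n) := by
        have := hper (i - n); rw [Nat.sub_add_cancel h] at this; exact this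
      rw [h1, Nat.mod_eq_sub_mod h]
      exact ih (i - n) (by omega)

private lemma cong_of_mod {n : ℕ} {f : ℕ → A} (hn : 0 < n) (hper : ∀ i, f (i + n) = f i)
    {i i' : ℕ} (h : i % n = i' % n) : f i = f i' := by
  rw [per_mod hn hper i, h, ← per_mod hn hper i']

private lemma key_lemma {n : ℕ} {f : ℕ → A} (hn : 0 < n) (hper : ∀ i, f (i + n) = f i)
    (a b : ℕ) (h : ∀ k, k < n - 1 → f (a + k) = f (b + k)) :
    f (a + (n - 1)) = f (b + (n - 1)) := by
  set d : ℕ := b % n + (n - a % n) with hd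
  set r₀ : ℕ := (a + (n - 1)) % n with hr₀
  have hr0lt : r₀ < n := Nat.mod_lt _ hn
  have hamod : n * (a / n) + a % n = a := Nat.div_add_mod a n
  have hamodlt : a % n < n := Nat.mod_lt _ hn
  have e0 : ∀ c : ℕ, (c + 1) * n = n * c + n := by intro c; ring
  have hAk : ∀ r : ℕ, (a + (r + (n - a % n)) % n) % n = r % n := by
    intro r
    have e1 : a + (r + (n - a % n)) = r + (a / n + 1) * n := by
      have := e0 (a / n); omega
    rw [Nat.add_mod_mod, e1, Nat.add_mul_mod_self_right]
  have hstep : ∀ r : ℕ, r % n ≠ r₀ → f r = f (r + d) := by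
    intro r hr
    set k : ℕ := (r + (n - a % n)) % n with hk
    have hk1 : k < n := Nat.mod_lt _ hn
    have hk2 : (a + k) % n = r % n := hAk r
    have hk3 : k ≠ n - 1 := by
      intro hke
      exact hr (by rw [← hk2, hr₀, hke])
    have hk4 : k < n - 1 := by omega
    have h5 := h k hk4
    have h6 : f r = f (a + k) := cong_of_mod hn hper hk2.symm
    have h7 : f (r + d) = f (b + k) := by
      apply cong_of_mod hn hper
      have hm1 : (a + k + d) % n = (r + d) % n :=
        Nat.ModEq.add_right d (show Nat.ModEq n (a + k) r from hk2)
      have e2 : a + k + d = (b % n + k) + (a / n + 1) * n := by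
        have := e0 (a / n); omega
      rw [← hm1, e2, Nat.add_mul_mod_self_right, Nat.mod_add_mod]
    rw [h6, h5, ← h7]
  have claim : ∀ s : ℕ, f (r₀ + d) = f r₀ ∨ f (r₀ + (s + 1) * d) = f (r₀ + d) := by
    intro s
    induction s with
    | zero => right; norm_num
    | succ s ih =>
      rcases ih with hL | hR
      · exact Or.inl hL
      · by_cases heq : (r₀ + (s + 1) * d) % n = r₀ % n
        · exact Or.inl (hR.symm.trans (cong_of_mod hn hper heq))
        · right
          have hs := hstep (r₀ + (s + 1) * d)
            (fun hc => heq (by rw [hc, Nat.mod_eq_of_lt hr0lt]))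
          have e3 : r₀ + (s + 1) * d + d = r₀ + (s + 1 + 1) * d := by ring
          rw [e3] at hs
          exact hs.symm.trans hR
  have hRes : f (r₀ + d) = f r₀ := by
    rcases claim (n - 1) with hL | hR
    · exact hL
    · have e4 : n - 1 + 1 = n := by omega
      rw [e4] at hR
      have e5 : (r₀ + n * d) % n = r₀ % n := by
        rw [mul_comm]; exact Nat.add_mul_mod_self_right r₀ d n
      exact hR.symm.trans (cong_of_mod hn hper e5.symm).symm
  have hc1 : (a + (n - 1)) % n = r₀ % n := by rw [← hr₀, Nat.mod_eq_of_lt hr0lt, hr₀]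
  have hc2 : (r₀ + d) % n = (b + (n - 1)) % n := by
    have hm2 : (r₀ + d) % n = (a + (n - 1) + d) % n :=
      Nat.ModEq.add_right d (show Nat.ModEq n r₀ (a + (n - 1)) from by
        rw [Nat.ModEq, Nat.mod_eq_of_lt hr0lt, hr₀])
    have e6 : a + (n - 1) + d = (b % n + (n - 1)) + (a / n + 1) * n := by
      have := e0 (a / n); omega
    rw [hm2, e6, Nat.add_mul_mod_self_right, Nat.mod_add_mod]
  calc f (a + (n - 1)) = f r₀ := cong_of_mod hn hper hc1
    _ = f (r₀ + d) := hRes.symm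
    _ = f (b + (n - 1)) := cong_of_mod hn hper hc2

private lemma flat_len (u : List A) (c : ℕ) :
    (List.replicate c u).flatten.length = c * u.length := by
  induction c with
  | zero => simp
  | succ c ih =>
    rw [List.replicate_succ, List.flatten_cons, List.length_append, ih]
    ring

private lemma flat_get (u : List A) (c : ℕ) :
    ∀ i, i < c * u.length → (List.replicate c u).flatten[i]? = u[i % u.length]? := by
  induction c with
  | zero => intro i h; simp at h
  | succ c ih =>
    intro i h
    have hn : 0 < u.length := by
      rcases Nat.eq_zero_or_pos u.length with h0 | h0
      · rw [h0] at h; simp at h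
      · exact h0
    rw [List.replicate_succ, List.flatten_cons]
    rcases lt_or_ge i u.length with hlt | hge
    · rw [List.getElem?_append, Nat.mod_eq_of_lt hlt, if_pos hlt]
    · rw [List.getElem?_append, if_neg (by omega), ih (i - u.length) (by
        have : (c + 1) * u.length = c * u.length + u.length := by ring
        omega), ← Nat.mod_eq_sub_mod hge]

end Helpers


/-- A K-linearly recurrent aperiodic subshift is (K+2)-power free: if X is a nonempty
shift-invariant set of sequences such that every factor w occurs in every factor of
length K|w|, and no element of X is periodic, then no word u^(K+2) (u nonempty) is a
factor of X. -/
theorem linearly_recurrent_power_free {A : Type*} (K : ℕ) (hK : 1 ≤ K)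
    (X : Set (ℕ → A)) (hne : X.Nonempty)
    (hshift : ∀ x ∈ X, (fun n => x (n + 1)) ∈ X)
    (hLR : ∀ w v : List A, (∃ x ∈ X, InfFactor x w) → (∃ x ∈ X, InfFactor x v) →
      w ≠ [] → v.length = K * w.length → w <:+: v)
    (haper : ∀ x ∈ X, ¬ ∃ p : ℕ, 0 < p ∧ ∀ n, x (n + p) = x n) :
    ∀ u : List A, u ≠ [] →
      ¬ ∃ x ∈ X, InfFactor x (List.flatten (List.replicate (K + 2) u)) := by
  classical
  intro u hu
  rintro ⟨x, hx, m, hm⟩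
  have hn : 0 < u.length := List.length_pos_iff.mpr hu
  set f : ℕ → A := fun i => u[i % u.length]'(Nat.mod_lt _ hn) with hf
  have hfper : ∀ i, f (i + u.length) = f i := by
    intro i
    simp only [hf]
    congr 1
    exact Nat.add_mod_right i u.length
  have hshift' : ∀ (z : ℕ → A), z ∈ X → ∀ c, (fun i => z (c + i)) ∈ X := by
    intro z hz c
    induction c with
    | zero => simpa using hz
    | succ c ih =>
      have h2 := hshift _ ih
      have e : (fun i => z (c + 1 + i)) = (fun i => z (c + (i + 1))) := by
        funext i; congr 1; omega
      rw [e]; exact h2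
  set y : ℕ → A := fun i => x (m + i) with hy
  have hyX : y ∈ X := hshift' x hx m
  have hlen : (List.flatten (List.replicate (K + 2) u)).length = (K + 2) * u.length :=
    flat_len u (K + 2)
  have hval : ∀ i, i < (K + 2) * u.length → y i = f i := by
    intro i hi
    have h1 : (List.flatten (List.replicate (K + 2) u))[i]? = some (y i) := by
      rw [hm, List.getElem?_map, List.getElem?_range (by rw [hlen]; exact hi)]
      rfl
    have h2 : (List.flatten (List.replicate (K + 2) u))[i]? = some (f i) := by
      rw [flat_get u (K + 2) i hi, List.getElem?_eq_getElem (Nat.mod_lt _ hn)]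
    rw [h1] at h2
    exact Option.some.inj h2
  have hex : ∃ i, y i ≠ f i := by
    by_contra hcon
    push_neg at hcon
    exact haper y hyX ⟨u.length, hn, fun i => by rw [hcon (i + u.length), hcon i, hfper]⟩
  set j := Nat.find hex with hj
  have hjs : y j ≠ f j := Nat.find_spec hex
  have hjmin : ∀ i, i < j → y i = f i := fun i hi => not_not.mp (Nat.find_min hex hi)
  have hjge : (K + 2) * u.length ≤ j := by
    by_contra hcon
    exact hjs (hval j (by omega))
  have hK2 : K * u.length ≤ (K + 2) * u.length := Nat.mul_le_mul_right _ (by omega)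
  have hn2 : u.length ≤ (K + 2) * u.length := by
    calc u.length = 1 * u.length := (one_mul _).symm
      _ ≤ _ := Nat.mul_le_mul_right _ (by omega)
  set b := j + 1 - u.length with hb
  set w : List A := (List.range u.length).map (fun k => y (b + k)) with hw
  set v : List A := (List.range (K * u.length)).map f with hv
  have hwfac : ∃ z ∈ X, InfFactor z w := by
    refine ⟨y, hyX, b, ?_⟩
    simp [hw]
  have hvfac : ∃ z ∈ X, InfFactor z v := by
    refine ⟨y, hyX, 0, ?_⟩
    simp only [hv, List.length_map, List.length_range]
    apply List.map_congr_left
    intro i hi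
    rw [List.mem_range] at hi
    rw [zero_add]
    exact (hval i (lt_of_lt_of_le hi hK2)).symm
  have hinf := hLR w v hwfac hvfac
    (List.length_pos_iff.mp (by simp [hw, hn]))
    (by simp [hw, hv])
  obtain ⟨s, t, hst⟩ := hinf
  set q := s.length with hq
  have hvlen : K * u.length = q + u.length + t.length := by
    have := congrArg List.length hst
    simp [hv, hw, hq] at this
    omega
  have hocc : ∀ k, k < u.length → y (b + k) = f (q + k) := by
    intro k hk
    have h1 : v[q + k]? = w[k]? := by
      have hwl : w.length = u.length := by simp [hw]
      rw [← hst, List.getElem?_append, if_pos (by rw [List.length_append, hwl]; omega),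
        List.getElem?_append, if_neg (by omega)]
      congr 1
      omega
    have h2 : w[k]? = some (y (b + k)) := by
      rw [hw, List.getElem?_map, List.getElem?_range hk]
      rfl
    have h3 : v[q + k]? = some (f (q + k)) := by
      rw [hv, List.getElem?_map, List.getElem?_range (by omega)]
      rfl
    rw [h2, h3] at h1
    exact (Option.some.inj h1).symm
  have hkey : f (b + (u.length - 1)) = f (q + (u.length - 1)) := by
    apply key_lemma hn hfper
    intro k hk
    have h1 := hocc k (by omega)
    have h2 := hjmin (b + k) (by omega)
    rw [← h2, h1]
  have hbj : b + (u.length - 1) = j := by omega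
  have hyj : y j = f (q + (u.length - 1)) := by
    have h1 := hocc (u.length - 1) (by omega)
    rw [hbj] at h1
    exact h1
  exact hjs (hyj.trans (hkey.symm.trans (by rw [hbj])))
end
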